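/- arXiv:2302.01193 — 2 statements merged into one kernel-verified Lean document; each statement's English description precedes it below -/
import Mathlib

section
/- Let S and A be finite nonempty types, T : S → A → S → ℝ transition probabilities with T s a s' ≥ 0 and ∑_{s'} T s a s' = 1 for all s, a, let π : S → A → ℝ be a stochastic policy (π s a ≥ 0, ∑_a π s a = 1 for each s), let R : S → A → ℝ be a reward, and let 0 ≤ γ < 1. Define R^π : S → ℝ by R^π s = ∑_a π s a * R s a and the matrix T^π : Matrix S S ℝ by T^π s s' = ∑_a π s a * T s a s'. Then there exists a unique V : S → ℝ satisfying the Bellman equation V s = ∑_a π s a * (R s a + γ * ∑_{s'} T s a s' * V s') for every s ∈ S. -/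
/-- In a finite MDP with transition probabilities `T`, stochastic policy `π`,
reward `R` and discount factor `0 ≤ γ < 1`, there is a unique value function
`V : S → ℝ` satisfying the Bellman equation. -/
theorem bellman_exists_unique
    {S A : Type*} [Fintype S] [Fintype A] [Nonempty S] [Nonempty A]
    (T : S → A → S → ℝ)
    (hT0 : ∀ s a s', 0 ≤ T s a s')
    (hT1 : ∀ s a, ∑ s', T s a s' = 1)
    (π : S → A → ℝ)
    (hπ0 : ∀ s a, 0 ≤ π s a)
    (hπ1 : ∀ s, ∑ a, π s a = 1)
    (R : S → A → ℝ)
    (γ : ℝ) (hγ0 : 0 ≤ γ) (hγ1 : γ < 1) :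
    ∃! V : S → ℝ, ∀ s, V s = ∑ a, π s a * (R s a + γ * ∑ s', T s a s' * V s') := by
  set f : (S → ℝ) → (S → ℝ) :=
    fun V s => ∑ a, π s a * (R s a + γ * ∑ s', T s a s' * V s') with hf
  set γ' : NNReal := ⟨γ, hγ0⟩ with hγ'
  have hlip : LipschitzWith γ' f := by
    apply LipschitzWith.of_dist_le_mul
    intro V W
    have hd0 : 0 ≤ dist V W := dist_nonneg
    rw [dist_pi_le_iff (by positivity)]
    intro s
    rw [Real.dist_eq]
    have hcoord : ∀ s', |V s' - W s'| ≤ dist V W := by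
      intro s'
      have := dist_le_pi_dist V W s'
      rwa [Real.dist_eq] at this
    have : f V s - f W s = ∑ a, π s a * (γ * ∑ s', T s a s' * (V s' - W s')) := by
      simp only [hf, ← Finset.sum_sub_distrib]
      refine Finset.sum_congr rfl fun a _ => ?_
      simp only [mul_sub, Finset.sum_sub_distrib]
      ring
    rw [this]
    calc |∑ a, π s a * (γ * ∑ s', T s a s' * (V s' - W s'))|
        ≤ ∑ a, |π s a * (γ * ∑ s', T s a s' * (V s' - W s'))| :=
          Finset.abs_sum_le_sum_abs _ _
      _ ≤ ∑ a, π s a * (γ * dist V W) := by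
          apply Finset.sum_le_sum
          intro a _
          rw [abs_mul, abs_of_nonneg (hπ0 s a), abs_mul, abs_of_nonneg hγ0]
          apply mul_le_mul_of_nonneg_left _ (hπ0 s a)
          apply mul_le_mul_of_nonneg_left _ hγ0
          calc |∑ s', T s a s' * (V s' - W s')|
              ≤ ∑ s', |T s a s' * (V s' - W s')| := Finset.abs_sum_le_sum_abs _ _
            _ ≤ ∑ s', T s a s' * dist V W := by
                apply Finset.sum_le_sum
                intro s' _
                rw [abs_mul, abs_of_nonneg (hT0 s a s')]
                exact mul_le_mul_of_nonneg_left (hcoord s') (hT0 s a s')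
            _ = dist V W := by rw [← Finset.sum_mul, hT1 s a, one_mul]
      _ = γ * dist V W := by rw [← Finset.sum_mul, hπ1 s, one_mul]
      _ = ↑γ' * dist V W := rfl
  have hγ'1 : γ' < 1 := by exact_mod_cast hγ1
  have hcontr : ContractingWith γ' f := ⟨hγ'1, hlip⟩
  refine ⟨hcontr.fixedPoint f, ?_, ?_⟩
  · intro s
    have := hcontr.fixedPoint_isFixedPt
    conv_lhs => rw [← this]
  · intro V hV
    exact hcontr.fixedPoint_unique (funext fun s => (hV s).symm)
end

section
/- Let S and A be finite nonempty types, T : S → A → S → ℝ, R : S → A → ℝ, γ ∈ ℝ, and let π : S → A be a deterministic policy. Define R^π s = R s (π s), the matrices T^π s s' = T s (π s) s' and, for each action a, T_a s s' = T s a s'; suppose 1 - γ • T^π is invertible, set V = (1 - γ • T^π)⁻¹ ⬝ᵥ R^π and Q s a = R s a + γ * ∑_{s'} T s a s' * V s'. Then π is optimal, i.e. Q s (π s) ≥ Q s a for all s ∈ S and a ∈ A, if and only if for all s ∈ S and a ∈ A: R^π s + γ * (((T^π - T_a) ⬝ (1 - γ • T^π)⁻¹) ⬝ᵥ R^π) s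 - R s a ≥ 0. -/
open Matrix

/-- Theorem A.3 of the paper: a deterministic policy `π` is optimal (its action
maximises `Q` in every state) if and only if the reward satisfies the linear
constraints `Rπ + γ • ((Tπ - Tₐ) (1 - γ Tπ)⁻¹) Rπ - R(·,a) ≥ 0` for all states
and actions. -/
theorem optimality_linear_constraints
    {S A : Type*} [Fintype S] [Fintype A] [Nonempty S] [Nonempty A] [DecidableEq S]
    (T : S → A → S → ℝ) (R : S → A → ℝ) (γ : ℝ)
    (π : S → A)
    (Rπ : S → ℝ) (hRπ : ∀ s, Rπ s = R s (π s))
    (Tπ : Matrix S S ℝ) (hTπ : ∀ s s', Tπ s s' = T s (π s) s')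
    (Ta : A → Matrix S S ℝ) (hTa : ∀ a s s', Ta a s s' = T s a s')
    (hinv : IsUnit (1 - γ • Tπ))
    (V : S → ℝ) (hV : V = (1 - γ • Tπ)⁻¹ *ᵥ Rπ)
    (Q : S → A → ℝ)
    (hQ : ∀ s a, Q s a = R s a + γ * ∑ s', T s a s' * V s') :
    (∀ s a, Q s (π s) ≥ Q s a) ↔
      (∀ s a, Rπ s + γ * ((((Tπ - Ta a) * (1 - γ • Tπ)⁻¹) *ᵥ Rπ) s) - R s a ≥ 0) := by
  have hdet : IsUnit (1 - γ • Tπ).det := (Matrix.isUnit_iff_isUnit_det _).mp hinv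
  have hMV : (1 - γ • Tπ) *ᵥ V = Rπ := by
    rw [hV, Matrix.mulVec_mulVec, Matrix.mul_nonsing_inv _ hdet, Matrix.one_mulVec]
  have hVs : ∀ s, V s = Rπ s + γ * (Tπ *ᵥ V) s := by
    intro s
    have h := congrFun hMV s
    simp only [Matrix.sub_mulVec, Matrix.smul_mulVec, Matrix.one_mulVec,
      Pi.sub_apply, Pi.smul_apply, smul_eq_mul] at h
    linarith
  have key : ∀ s a, Rπ s + γ * ((((Tπ - Ta a) * (1 - γ • Tπ)⁻¹) *ᵥ Rπ) s) - R s a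
      = Q s (π s) - Q s a := by
    intro s a
    have h1 : (Tπ *ᵥ V) s = ∑ s', T s (π s) s' * V s' := by
      simp [Matrix.mulVec, dotProduct, hTπ]
    have h2 : ((Ta a) *ᵥ V) s = ∑ s', T s a s' * V s' := by
      simp [Matrix.mulVec, dotProduct, hTa]
    have hsub : (((Tπ - Ta a) * (1 - γ • Tπ)⁻¹) *ᵥ Rπ) s
        = (Tπ *ᵥ V) s - ((Ta a) *ᵥ V) s := by
      rw [← Matrix.mulVec_mulVec, ← hV, Matrix.sub_mulVec, Pi.sub_apply]
    have hQπ : Q s (π s) = Rπ s + γ * (Tπ *ᵥ V) s := by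
      rw [hQ, hRπ, h1]
    rw [hsub, hQπ, hQ s a, h2]
    ring
  constructor <;> intro h s a <;> have := key s a <;> have := h s a <;> linarith
end
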